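/- arXiv:1708.07090 — 3 statements merged into one kernel-verified Lean document; each statement's English description precedes it below -/
import Mathlib

section
/- Let λ be a rigid D_n partition of 2n with length l. Then (i) l is even (the longest row λ^T_1 of the transposed Young diagram has an even number of boxes); (ii) for every i ≥ 1, λ^T_{2i} and λ^T_{2i+1} have the same parity; (iii) if λ_1 is even (i.e. the transposed diagram has an even number of rows), then λ^T_{λ_1} (the shortest row) is even. -/
/-!
The multiplicity of `k` in `λ` is `λ^T_k - λ^T_{k+1}`, and the `D_n` condition makes it even
for every even `k`. This gives (ii) at `k = 2i`, and (iii) because `λ^T_{λ_1}` is the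
multiplicity of the largest part. For (i), the number of odd parts has the parity of `2n`
and the number of even parts is a sum of even multiplicities.
-/

namespace List

theorem even_countP_of_forall_even_count {α : Type*} [DecidableEq α] (p : α → Bool)
    (l : List α) (h : ∀ a, p a → Even (l.count a)) : Even (l.countP p) := by
  rw [← sum_map_count_dedup_filter_eq_countP]
  refine sum_induction Even (fun _ _ => Even.add) .zero fun x hx => ?_
  obtain ⟨a, ha, rfl⟩ := mem_map.1 hx
  exact h a (mem_filter.1 ha).2

theorem even_sum_iff_even_countP_odd (l : List ℕ) :
    Even l.sum ↔ Even (l.countP fun a => decide (Odd a)) := by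
  induction l with
  | nil => simp
  | cons a t ih =>
    rw [sum_cons, countP_cons, Nat.even_add, ih]
    by_cases ha : Odd a
    · simp [ha, Nat.even_add_one, Nat.not_even_iff_odd.2 ha]
    · simp [ha, Nat.not_odd_iff_even.1 ha]

theorem even_length_of_even_sum {l : List ℕ} (hsum : Even l.sum)
    (hcount : ∀ m, Even m → Even (l.count m)) : Even l.length := by
  have hodd := (even_sum_iff_even_countP_odd l).1 hsum
  have heven : Even (l.countP fun a => decide (Even a)) :=
    even_countP_of_forall_even_count _ l fun m hm => hcount m (of_decide_eq_true hm)
  rw [length_eq_countP_add_countP fun a => decide (Odd a)]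
  simp only [decide_eq_true_eq, Nat.not_odd_iff_even]
  exact hodd.add heven

theorem countP_le_eq_countP_succ_le_add_count (k : ℕ) (l : List ℕ) :
    l.countP (fun a => decide (k ≤ a))
      = l.countP (fun a => decide (k + 1 ≤ a)) + l.count k := by
  induction l with
  | nil => simp
  | cons a t ih =>
    simp only [countP_cons, count_cons, ih, beq_iff_eq, decide_eq_true_eq]
    split_ifs <;> omega

theorem countP_le_eq_count_of_forall_le {α : Type*} [LinearOrder α] {l : List α} {a : α}
    (h : ∀ b ∈ l, b ≤ a) : l.countP (fun b => decide (a ≤ b)) = l.count a := by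
  rw [count_eq_countP]
  refine countP_congr fun b hb => ?_
  simp only [decide_eq_true_eq, beq_iff_eq]
  exact ⟨fun hab => le_antisymm (h b hb) hab, fun hba => hba ▸ le_rfl⟩

theorem Pairwise.le_getD_zero {α : Type*} [Preorder α] {l : List α}
    (h : l.Pairwise (· ≥ ·)) (d : α) {b : α} (hb : b ∈ l) : b ≤ l.getD 0 d := by
  cases l with
  | nil => simp at hb
  | cons a t =>
    rcases mem_cons.1 hb with rfl | hb
    · exact le_rfl
    · exact (pairwise_cons.1 h).1 b hb

end List

theorem rigid_Dn_partition_structure_general (n : ℕ) (lam : List ℕ)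
    (hsort : lam.Pairwise (· ≥ ·))
    (hsum : lam.sum = 2 * n)
    (hDn : ∀ m : ℕ, Even m → Even (lam.count m)) :
    Even lam.length ∧
    (∀ i : ℕ, 1 ≤ i →
      (lam.countP (fun a => decide (2 * i ≤ a))) % 2
        = (lam.countP (fun a => decide (2 * i + 1 ≤ a))) % 2) ∧
    (Even (lam.getD 0 0) →
      Even (lam.countP (fun a => decide (lam.getD 0 0 ≤ a)))) := by
  refine ⟨List.even_length_of_even_sum (hsum ▸ even_two_mul n) hDn, fun i _ => ?_,
    fun hfirst => ?_⟩
  · rw [List.countP_le_eq_countP_succ_le_add_count, Nat.add_mod,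
      Nat.even_iff.1 (hDn _ (even_two_mul i))]
    simp
  · rw [List.countP_le_eq_count_of_forall_le fun b hb => hsort.le_getD_zero 0 hb]
    exact hDn _ hfirst

/-- Structure of rigid `D_n` partitions: for a partition `lam` of `2n`
(weakly decreasing, positive parts) in which every even integer occurs an even
number of times, with no gaps and no odd integer occurring exactly twice:
(i) the length `l` of `lam` (= the longest row `λ^T_1` of the transposed
diagram) is even; (ii) for every `i ≥ 1` the rows `λ^T_{2i}` and `λ^T_{2i+1}`
of the transposed diagram have the same parity; (iii) if `λ_1` is even then
the shortest row `λ^T_{λ_1}` is even.  Here `λ^T_k = #{ i : λ_i ≥ k }`. -/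
theorem rigid_Dn_partition_structure (n : ℕ) (hn : 0 < n) (lam : List ℕ)
    (hsort : lam.Pairwise (· ≥ ·))
    (hpos : ∀ x ∈ lam, 0 < x)
    (hsum : lam.sum = 2 * n)
    (hDn : ∀ m : ℕ, Even m → Even (lam.count m))
    (hgap : ∀ i : ℕ, i + 1 < lam.length → lam.getD i 0 ≤ lam.getD (i + 1) 0 + 1)
    (hrig : ∀ m : ℕ, Odd m → lam.count m ≠ 2) :
    Even lam.length ∧
    (∀ i : ℕ, 1 ≤ i →
      (lam.countP (fun a => decide (2 * i ≤ a))) % 2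
        = (lam.countP (fun a => decide (2 * i + 1 ≤ a))) % 2) ∧
    (Even (lam.getD 0 0) →
      Even (lam.countP (fun a => decide (lam.getD 0 0 ≤ a)))) :=
  rigid_Dn_partition_structure_general n lam hsort hsum hDn
end

section
/- Let λ be a C_n partition with length l, and let l' = l if l is even and l' = l + 1 if l is odd; extend λ by setting λ_k = 0 for l < k ≤ l'. Then exactly l'/2 of the numbers s_k = l' − k + λ_k (1 ≤ k ≤ l') are odd and exactly l'/2 of them are even. Consequently, the symbol of λ in the C_n theory has the same number of entries in its top and bottom rows. -/
/-- `svals μ` lists the numbers `s_k = l - k + μ_k` (`1 ≤ k ≤ l`, `l` the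
length of `μ`), computed with 0-based indices: entry `k` is `(l - 1 - k) + μ_k`.
For weakly decreasing `μ` this list is strictly decreasing. -/
def svals (μ : List ℕ) : List ℕ :=
  μ.mapIdx (fun k a => (μ.length - 1 - k) + a)

/-- The odd values `2f_1+1 < … < 2f_M+1` of `svals μ`, in increasing order. -/
def oddVals (μ : List ℕ) : List ℕ :=
  ((svals μ).filter (fun x => decide (x % 2 = 1))).reverse

/-- The even values `2g_1 < … < 2g_{M'}` of `svals μ`, in increasing order. -/
def evenVals (μ : List ℕ) : List ℕ :=
  ((svals μ).filter (fun x => decide (x % 2 = 0))).reverse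

/-- The top row of the symbol of `μ`: `α_i = f_i - i + 1` where
`2f_i + 1` is the `i`-th smallest odd value of `svals μ` (0-based entry `i`
is `α_{i+1} = f_{i+1} - i`). -/
def topRow (μ : List ℕ) : List ℕ :=
  (oddVals μ).mapIdx (fun i v => (v - 1) / 2 - i)

/-- The bottom row of the symbol of `μ`: `β_i = g_i - i + 1` where `2g_i` is
the `i`-th smallest even value of `svals μ`. -/
def botRow (μ : List ℕ) : List ℕ :=
  (evenVals μ).mapIdx (fun i v => v / 2 - i)

theorem svals_cons (a : ℕ) (ν : List ℕ) :
    svals (a :: ν) = (ν.length + a) :: svals ν := by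
  simp only [svals, List.mapIdx_cons, List.length_cons]
  congr 2
  funext i x
  omega

theorem length_svals (μ : List ℕ) : (svals μ).length = μ.length :=
  List.length_mapIdx

theorem length_topRow (μ : List ℕ) :
    (topRow μ).length = (svals μ).countP (fun x => decide (x % 2 = 1)) := by
  simp [topRow, oddVals, List.countP_eq_length_filter]

theorem length_botRow (μ : List ℕ) :
    (botRow μ).length = (svals μ).countP (fun x => decide (x % 2 = 0)) := by
  simp [botRow, evenVals, List.countP_eq_length_filter]

theorem countP_even_add_countP_odd (l : List ℕ) :
    l.countP (fun x => decide (x % 2 = 0)) + l.countP (fun x => decide (x % 2 = 1))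
      = l.length := by
  rw [List.length_eq_countP_add_countP (fun x => decide (x % 2 = 0)) (l := l)]
  congr 1
  refine List.countP_congr fun x _ => ?_
  simp only [decide_eq_true_eq]
  omega

section OddCounts

variable {a : ℕ} {ν : List ℕ}

theorem even_count_of_cons (ha : Even a)
    (h : ∀ m, Odd m → Even ((a :: ν).count m)) : ∀ m, Odd m → Even (ν.count m) := by
  intro m hm
  have hne : a ≠ m := by rintro rfl; exact Nat.not_even_iff_odd.mpr hm ha
  simpa [List.count_cons, hne] using h m hm

theorem even_count_of_cons_cons
    (h : ∀ m, Odd m → Even ((a :: a :: ν).count m)) : ∀ m, Odd m → Even (ν.count m) := by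
  intro m hm
  have hm' := h m hm
  by_cases ham : a = m
  · subst ham
    simp only [List.count_cons_self] at hm'
    simpa [parity_simps] using hm'
  · simpa [List.count_cons, ham] using hm'

theorem exists_eq_cons_of_even_count (hs : (a :: ν).Pairwise (· ≥ ·))
    (hcount : Even ((a :: ν).count a)) : ∃ ν', ν = a :: ν' := by
  have hmem : a ∈ ν := by
    by_contra hnm
    rw [List.count_cons_self, List.count_eq_zero.mpr hnm] at hcount
    exact Nat.not_even_one hcount
  obtain ⟨b, ν', rfl⟩ := List.exists_cons_of_ne_nil (List.ne_nil_of_mem hmem)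
  have hba : b ≤ a := List.rel_of_pairwise_cons hs List.mem_cons_self
  have hab : a ≤ b := by
    rcases List.mem_cons.mp hmem with h | h
    · omega
    · exact List.rel_of_pairwise_cons hs.of_cons h
  exact ⟨ν', by rw [le_antisymm hba hab]⟩

end OddCounts

theorem countP_odd_succ_cons_cons (k : ℕ) (l : List ℕ) :
    ((k + 1) :: k :: l).countP (fun x => decide (x % 2 = 1))
      = l.countP (fun x => decide (x % 2 = 1)) + 1 := by
  simp only [List.countP_cons, decide_eq_true_eq]
  split_ifs <;> omega

/-- Odd parts of a weakly decreasing list come in adjacent equal pairs, whose two values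
of `s` are consecutive; an even part `a` followed by `k` parts has `s = k + a ≡ k`. -/
theorem countP_odd_svals : ∀ μ : List ℕ, μ.Pairwise (· ≥ ·) →
    (∀ m, Odd m → Even (μ.count m)) →
    (svals μ).countP (fun x => decide (x % 2 = 1)) = μ.length / 2
  | [], _, _ => rfl
  | a :: ν, hs, hC => by
    rcases Nat.even_or_odd a with ha | ha
    · have ih := countP_odd_svals ν hs.of_cons (even_count_of_cons ha hC)
      have ha2 := Nat.even_iff.mp ha
      rw [svals_cons, List.countP_cons, ih, List.length_cons]
      simp only [decide_eq_true_eq]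
      split_ifs <;> omega
    · obtain ⟨ν', rfl⟩ := exists_eq_cons_of_even_count hs (hC a ha)
      have ih := countP_odd_svals ν' hs.of_cons.of_cons (even_count_of_cons_cons hC)
      rw [svals_cons, svals_cons, List.length_cons, add_right_comm,
        countP_odd_succ_cons_cons, ih, List.length_cons, List.length_cons]
      omega

theorem pairwise_ge_append_zero {l : List ℕ} (h : l.Pairwise (· ≥ ·)) :
    (l ++ [0]).Pairwise (· ≥ ·) := by
  simpa [List.pairwise_append] using h

theorem count_append_zero {m : ℕ} (hm : m ≠ 0) (l : List ℕ) :
    (l ++ [0]).count m = l.count m := by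
  simp [List.count_append, Ne.symm hm]

theorem Cn_symbol_row_sizes_general (lam : List ℕ)
    (hsort : lam.Pairwise (· ≥ ·))
    (hCn : ∀ m : ℕ, Odd m → Even (lam.count m)) :
    ∀ lam' : List ℕ, lam' = (if lam.length % 2 = 1 then lam ++ [0] else lam) →
    ((svals lam').countP (fun x => decide (x % 2 = 1))) = lam'.length / 2 ∧
    ((svals lam').countP (fun x => decide (x % 2 = 0))) = lam'.length / 2 ∧
    (topRow lam').length = (botRow lam').length := by
  intro lam' hlam'
  obtain ⟨hsort', hCn', hlen⟩ : lam'.Pairwise (· ≥ ·) ∧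
      (∀ m, Odd m → Even (lam'.count m)) ∧ lam'.length % 2 = 0 := by
    subst hlam'
    split_ifs with hodd
    · refine ⟨pairwise_ge_append_zero hsort, fun m hm => ?_, by simp; omega⟩
      rw [count_append_zero (by rintro rfl; exact Nat.not_odd_zero hm)]
      exact hCn m hm
    · exact ⟨hsort, hCn, by omega⟩
  have hodd := countP_odd_svals lam' hsort' hCn'
  have heven : (svals lam').countP (fun x => decide (x % 2 = 0)) = lam'.length / 2 := by
    have := countP_even_add_countP_odd (svals lam')
    rw [length_svals] at this
    omega
  exact ⟨hodd, heven, by rw [length_topRow, length_botRow, hodd, heven]⟩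

/-- For a `C_n` partition `lam` of `2n` with length `l`, let `lam'` be `lam`
with one extra part `0` appended when `l` is odd (so `lam'` has the padded
length `l'`).  Then exactly `l'/2` of the numbers `s_k = l' - k + λ_k`
(`1 ≤ k ≤ l'`) are odd and exactly `l'/2` are even; consequently the symbol of
`lam` in the `C_n` theory has the same number of entries in its two rows. -/
theorem Cn_symbol_row_sizes (n : ℕ) (hn : 0 < n) (lam : List ℕ)
    (hsort : lam.Pairwise (· ≥ ·))
    (hpos : ∀ x ∈ lam, 0 < x)
    (hsum : lam.sum = 2 * n)
    (hCn : ∀ m : ℕ, Odd m → Even (lam.count m)) :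
    ∀ lam' : List ℕ, lam' = (if lam.length % 2 = 1 then lam ++ [0] else lam) →
    ((svals lam').countP (fun x => decide (x % 2 = 1))) = lam'.length / 2 ∧
    ((svals lam').countP (fun x => decide (x % 2 = 0))) = lam'.length / 2 ∧
    (topRow lam').length = (botRow lam').length :=
  Cn_symbol_row_sizes_general lam hsort hCn
end

section
/- (Extended Rule A+B for adding 2·1^{2m}) Let μ = (μ_1 ≥ … ≥ μ_l) be a weakly decreasing sequence of nonnegative integers and let i ≥ 1, m ≥ 1 with i + 2m ≤ l and μ_i = μ_{i+1} = … = μ_{i+2m}. Let μ' be obtained from μ by adding 2 to μ_i and 1 to each of μ_{i+1}, …, μ_{i+2m}, and set s_k = l − k + μ_k and s'_k = l − k + μ'_k. Then the multiset {s'_1, …, s'_l} is obtained from the multiset {s_1, …, s_l} by replacing each of the m + 1 values s_i, s_i − 2, …, s_i − 2m by that value plus 2. In particular, if s_i is odd then the multiset of even values of s' equals that of s while m + 1 odd values each increase by 2; if s_i is even then the multiset of odd values is unchanged while m + 1 even values each increase by 2. -/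
open Multiset

theorem map_range_add_map_window {α : Type*} {f g : ℕ → α} {i n l : ℕ} (hl : i + n ≤ l)
    (hfg : ∀ k < l, (k < i ∨ i + n ≤ k) → f k = g k) :
    (range l).map f + (range n).map (fun t => g (i + t)) =
      (range l).map g + (range n).map (fun t => f (i + t)) := by
  obtain ⟨r, rfl⟩ := Nat.exists_eq_add_of_le hl
  have decompose : ∀ h : ℕ → α, (range (i + n + r)).map h = (range i).map h
      + (range n).map (fun t => h (i + t)) + (range r).map (fun t => h (i + n + t)) := by
    intro h
    simp only [range_add, map_add, map_map, Function.comp_def, add_assoc]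
  have left : (range i).map f = (range i).map g :=
    map_congr rfl fun k hk => hfg k (by simp only [mem_range] at hk; omega) (.inl (by simpa using hk))
  have right : (range r).map (fun t => f (i + n + t)) = (range r).map (fun t => g (i + n + t)) :=
    map_congr rfl fun t ht => hfg _ (by simp only [mem_range] at ht; omega) (.inr (by omega))
  rw [decompose f, decompose g, left, right]
  abel

theorem map_range_succ_add_singleton {α : Type*} (f : ℕ → α) (n : ℕ) :
    (range n).map (fun t => f (t + 1)) + {f 0} = (range n).map f + {f n} := by
  induction n with
  | zero => rfl
  | succ n ih =>
    rw [range_succ, map_cons, map_cons, cons_add, ih, ← singleton_add, ← singleton_add]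
    abel

theorem filter_eq_filter_of_add_eq_add {α : Type*} (p : α → Prop) [DecidablePred p]
    {s t u v : Multiset α} (h : s + u = t + v) (hu : ∀ a ∈ u, ¬p a) (hv : ∀ a ∈ v, ¬p a) :
    s.filter p = t.filter p := by
  simpa only [filter_add, filter_eq_nil.2 hu, filter_eq_nil.2 hv, add_zero]
    using congrArg (filter p) h

theorem eq_tsub_add_of_add_eq_add {α : Type*} [DecidableEq α] {s t u v : Multiset α}
    (h : s + u = t + v) (hu : u ≤ t) : s = t - u + v := by
  rw [tsub_add_eq_add_tsub hu, ← h, add_tsub_cancel_right]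

theorem List.getD_mapIdx_of_lt {α β : Type*} {f : ℕ → α → β} {l : List α} {k : ℕ} {a : α}
    {b : β} (hk : k < l.length) : (l.mapIdx f).getD k b = f k (l.getD k a) := by
  simp [List.getD_eq_getElem?_getD, List.getElem?_mapIdx, List.getElem?_eq_getElem hk]

theorem coe_svals (μ : List ℕ) :
    (svals μ : Multiset ℕ) = (range μ.length).map (fun k => μ.length - 1 - k + μ.getD k 0) := by
  rw [← coe_range, map_coe, svals]
  congr 1
  apply List.ext_getElem (by simp)
  intro k hk _
  simp [List.getD_eq_getElem?_getD, List.getElem?_eq_getElem (by simpa using hk : k < μ.length)]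

theorem getD_svals (μ : List ℕ) {i : ℕ} (hi : i < μ.length) :
    (svals μ).getD i 0 = μ.length - 1 - i + μ.getD i 0 := by
  simp [svals, List.getD_eq_getElem?_getD, List.getElem?_mapIdx, List.getElem?_eq_getElem hi]

def addTwoOnes (μ : List ℕ) (i m : ℕ) : List ℕ :=
  μ.mapIdx fun k a => if k = i then a + 2 else if i < k ∧ k ≤ i + 2 * m then a + 1 else a

theorem svals_addTwoOnes_add_singleton {μ : List ℕ} {i m : ℕ} (hle : i + 2 * m < μ.length)
    (heq : ∀ k, i ≤ k → k ≤ i + 2 * m → μ.getD k 0 = μ.getD i 0) :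
    (svals (addTwoOnes μ i m) : Multiset ℕ) + {(svals μ).getD i 0 - 2 * m} =
      svals μ + {(svals μ).getD i 0 + 2} := by
  have hlen : (addTwoOnes μ i m).length = μ.length := List.length_mapIdx
  rw [coe_svals, coe_svals, hlen, getD_svals μ (by omega)]
  set l := μ.length
  set c := l - 1 - i + μ.getD i 0
  have hs : ∀ t ≤ 2 * m, l - 1 - (i + t) + μ.getD (i + t) 0 = c - t := fun t ht => by
    rw [heq (i + t) (by omega) (by omega)]; omega
  have hs' : ∀ k < l, (addTwoOnes μ i m).getD k 0 =
      if k = i then μ.getD k 0 + 2 else if i < k ∧ k ≤ i + 2 * m then μ.getD k 0 + 1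
      else μ.getD k 0 := fun k hk => List.getD_mapIdx_of_lt hk
  have window := map_range_add_map_window (i := i) (n := 2 * m + 1) (l := l) (by omega)
    (f := fun k => l - 1 - k + (addTwoOnes μ i m).getD k 0)
    (g := fun k => l - 1 - k + μ.getD k 0) fun k hk hout => by
      simp only [hs' k hk]; rw [if_neg (by omega), if_neg (by omega)]
  have block : (range (2 * m + 1)).map (fun t => l - 1 - (i + t) + μ.getD (i + t) 0) =
      (c - 2 * m) ::ₘ (range (2 * m)).map (c - ·) := by
    rw [range_succ, map_cons, hs _ le_rfl]
    exact congrArg _ (map_congr rfl fun t ht => hs t (by simp only [mem_range] at ht; omega))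
  have block' : (range (2 * m + 1)).map
      (fun t => l - 1 - (i + t) + (addTwoOnes μ i m).getD (i + t) 0) =
      (c + 2) ::ₘ (range (2 * m)).map (c - ·) := by
    rw [← coe_range, List.range_succ_eq_map, ← cons_coe, map_cons, ← map_coe, coe_range, map_map]
    congr 1
    · rw [Nat.add_zero, hs' i (by omega), if_pos rfl]; omega
    · refine map_congr rfl fun t ht => ?_
      simp only [mem_range] at ht
      simp only [Function.comp_apply, hs' _ (by omega : i + t.succ < l)]
      rw [if_neg (by omega), if_pos (by omega), heq _ (by omega) (by omega)]
      omega
  rwa [block, block', ← singleton_add, ← singleton_add, ← add_assoc, ← add_assoc,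
    add_left_inj] at window

theorem map_range_sub_two_mul_add_singleton {c n : ℕ} (hn : 2 * n ≤ c) :
    ((List.range (n + 1)).map (fun t => c - 2 * t) : Multiset ℕ) + {c + 2} =
      ((List.range (n + 1)).map (fun t => c - 2 * t + 2) : Multiset ℕ) + {c - 2 * n} := by
  have h := map_range_succ_add_singleton (fun t => c + 2 - 2 * t) (n + 1)
  rw [← map_coe, ← map_coe, coe_range]
  have hA : (range (n + 1)).map (fun t => c - 2 * t) =
      (range (n + 1)).map (fun t => c + 2 - 2 * (t + 1)) := map_congr rfl fun t _ => by omega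
  have hB : (range (n + 1)).map (fun t => c - 2 * t + 2) =
      (range (n + 1)).map (fun t => c + 2 - 2 * t) :=
    map_congr rfl fun t ht => by simp only [mem_range] at ht; omega
  rw [hA, hB, show c - 2 * n = c + 2 - 2 * (n + 1) by omega]
  exact h

theorem map_range_sub_two_mul_le_svals {μ : List ℕ} {i m : ℕ} (hle : i + 2 * m < μ.length)
    (heq : ∀ k, i ≤ k → k ≤ i + 2 * m → μ.getD k 0 = μ.getD i 0) :
    ((List.range (m + 1)).map (fun t => (svals μ).getD i 0 - 2 * t) : Multiset ℕ) ≤ svals μ := by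
  have hc := getD_svals μ (i := i) (by omega)
  have hnodup : ((List.range (m + 1)).map (fun t => (svals μ).getD i 0 - 2 * t)).Nodup :=
    List.nodup_range.map_on fun x hx y hy hxy => by simp only [List.mem_range] at hx hy; omega
  rw [le_iff_subset (coe_nodup.2 hnodup), coe_svals]
  intro x hx
  simp only [mem_coe, List.mem_map, List.mem_range] at hx
  obtain ⟨t, ht, rfl⟩ := hx
  exact mem_map.2 ⟨i + 2 * t, mem_range.2 (by omega), by rw [heq _ (by omega) (by omega)]; omega⟩

theorem extendedRuleAB_general (μ : List ℕ) (i m : ℕ)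
    (hle : i + 2 * m < μ.length)
    (heq : ∀ k, i ≤ k → k ≤ i + 2 * m → μ.getD k 0 = μ.getD i 0) :
    ∀ μ' : List ℕ,
      μ' = μ.mapIdx (fun k a =>
        if k = i then a + 2 else if i < k ∧ k ≤ i + 2 * m then a + 1 else a) →
    ((svals μ' : Multiset ℕ) =
      (svals μ : Multiset ℕ)
        - (((List.range (m + 1)).map (fun t => (svals μ).getD i 0 - 2 * t)) : Multiset ℕ)
        + (((List.range (m + 1)).map (fun t => (svals μ).getD i 0 - 2 * t + 2)) : Multiset ℕ)) ∧
    (((svals μ).getD i 0) % 2 = 1 →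
      (((svals μ').filter (fun x => decide (x % 2 = 0))) : Multiset ℕ)
        = (((svals μ).filter (fun x => decide (x % 2 = 0))) : Multiset ℕ)) ∧
    (((svals μ).getD i 0) % 2 = 0 →
      (((svals μ').filter (fun x => decide (x % 2 = 1))) : Multiset ℕ)
        = (((svals μ).filter (fun x => decide (x % 2 = 1))) : Multiset ℕ)) := by
  rintro μ' rfl
  set c := (svals μ).getD i 0 with hc
  have hcm : 2 * m ≤ c := by rw [hc, getD_svals μ (by omega)]; omega
  have hadd : (svals (addTwoOnes μ i m) : Multiset ℕ)
      + ((List.range (m + 1)).map (fun t => c - 2 * t) : Multiset ℕ)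
      = svals μ + ((List.range (m + 1)).map (fun t => c - 2 * t + 2) : Multiset ℕ) := by
    refine add_right_cancel (b := {c + 2}) ?_
    rw [add_assoc, map_range_sub_two_mul_add_singleton hcm, ← add_assoc, add_right_comm,
      svals_addTwoOnes_add_singleton hle heq, add_right_comm]
  refine ⟨eq_tsub_add_of_add_eq_add hadd (map_range_sub_two_mul_le_svals hle heq),
    fun hodd => ?_, fun heven => ?_⟩ <;>
  refine filter_eq_filter_of_add_eq_add _ hadd ?_ ?_ <;>
  · intro x hx
    obtain ⟨t, ht, rfl⟩ := List.mem_map.1 (mem_coe.1 hx)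
    rw [List.mem_range] at ht
    omega

/-- **Extended Rule A+B** (adding `2·1^{2m}`).  Let `μ` be weakly decreasing
with `2m + 1` equal consecutive parts `μ_i = … = μ_{i+2m}` (0-based indices,
`i + 2m < l`), and let `μ'` add `2` to `μ_i` and `1` to each of
`μ_{i+1}, …, μ_{i+2m}`.  Then the multiset of values `s'_k` is obtained from
the multiset of values `s_k` by replacing each of the `m + 1` values
`s_i, s_i - 2, …, s_i - 2m` by that value plus 2.  In particular, if `s_i`
is odd the multiset of even values is unchanged, and if `s_i` is even the
multiset of odd values is unchanged. -/
theorem extendedRuleAB (μ : List ℕ) (hsort : μ.Pairwise (· ≥ ·)) (i m : ℕ)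
    (hm : 1 ≤ m) (hle : i + 2 * m < μ.length)
    (heq : ∀ k, i ≤ k → k ≤ i + 2 * m → μ.getD k 0 = μ.getD i 0) :
    ∀ μ' : List ℕ,
      μ' = μ.mapIdx (fun k a =>
        if k = i then a + 2 else if i < k ∧ k ≤ i + 2 * m then a + 1 else a) →
    ((svals μ' : Multiset ℕ) =
      (svals μ : Multiset ℕ)
        - (((List.range (m + 1)).map (fun t => (svals μ).getD i 0 - 2 * t)) : Multiset ℕ)
        + (((List.range (m + 1)).map (fun t => (svals μ).getD i 0 - 2 * t + 2)) : Multiset ℕ)) ∧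
    (((svals μ).getD i 0) % 2 = 1 →
      (((svals μ').filter (fun x => decide (x % 2 = 0))) : Multiset ℕ)
        = (((svals μ).filter (fun x => decide (x % 2 = 0))) : Multiset ℕ)) ∧
    (((svals μ).getD i 0) % 2 = 0 →
      (((svals μ').filter (fun x => decide (x % 2 = 1))) : Multiset ℕ)
        = (((svals μ).filter (fun x => decide (x % 2 = 1))) : Multiset ℕ)) :=
  extendedRuleAB_general μ i m hle heq
end
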